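/- arXiv:1309.7744 — 3 statements merged into one kernel-verified Lean document; each statement's English description precedes it below -/
import Mathlib

section
/- The Koszul braces satisfy the hereditarity property: if Φ_k^Δ vanishes identically on A^⊗k, then Φ_{k+1}^Δ vanishes identically on A^⊗(k+1). -/
/- STATEMENT 1: the Koszul braces
`Φ_k^Δ(a₁,…,a_k) = Σ_{1≤i≤k} (−1)^{k−i} Σ_σ ε(σ) Δ(a_{σ(1)}⋯a_{σ(i)}) a_{σ(i+1)}⋯a_{σ(k)}`
(σ over (i,k−i)-unshuffles, ε(σ) the Koszul sign) are hereditary: if `Φ_k^Δ` vanishes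
identically then so does `Φ_{k+1}^Δ`.

In a graded commutative algebra an `(i,k−i)`-unshuffle is determined by the subset
`S = {σ(1),…,σ(i)}` of cardinality `i`, and the Koszul sign of the unshuffle moving `S`
to the front is `(−1)^{Σ_{j∈S, l∉S, l<j} d_j d_l}`. -/

/-- ordered product of the entries of `a` indexed by `S` (in increasing index order). -/
noncomputable def prodOn {A : Type} [Ring A] {k : ℕ} (a : Fin k → A) (S : Finset (Fin k)) : A :=
  ((S.sort (· ≤ ·)).map a).prod

/-- Koszul sign of the unshuffle moving `S` to the front, inputs of degrees `d`. -/
noncomputable def koszulSignSet {k : ℕ} (d : Fin k → ℤ) (S : Finset (Fin k)) : ℤ :=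
  ((∑ j ∈ S, ∑ l ∈ Sᶜ.filter (fun l => l < j), d j * d l).negOnePow : ℤ)

/-- The Koszul brace `Φ_k^Δ`, evaluated on homogeneous elements `a` of degrees `d`. -/
noncomputable def koszulBrace {K A : Type} [Field K] [Ring A] [Algebra K A]
    (Δ : A →ₗ[K] A) {k : ℕ} (d : Fin k → ℤ) (a : Fin k → A) : A :=
  ∑ S ∈ Finset.univ.powerset.filter (fun S : Finset (Fin k) => S.Nonempty),
    ((-1 : ℤ) ^ (k - S.card) * koszulSignSet d S) • (Δ (prodOn a S) * prodOn a Sᶜ)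

/-! Koszul's recursion
`Φ_{k+2}(b, x, y) = Φ_{k+1}(b, xy) - Φ_{k+1}(b, x) y - (-1)^{|x||y|} Φ_{k+1}(b, y) x`
holds term by term: splitting the subsets of `{1, …, k+2}` according to which of the last two
indices they contain, the subsets containing both match the merged brace, those containing
exactly one match the two other braces, and those containing neither cancel against the
remaining terms of the right-hand side, using `yx = (-1)^{|x||y|} xy`. When `Φ_{k+1}` vanishes,
the right-hand side vanishes, since `xy` is again homogeneous. -/

open Finset

section Subsets

variable {n : ℕ}

theorem sum_finset_fin_succ {M : Type*} [AddCommMonoid M] (f : Finset (Fin (n + 1)) → M) :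
    ∑ S, f S = ∑ T : Finset (Fin n),
      (f (T.map Fin.castSuccEmb) + f (insert (Fin.last n) (T.map Fin.castSuccEmb))) := by
  have hpow : (univ.map Fin.castSuccEmb).powerset
      = (univ : Finset (Finset (Fin n))).map (mapEmbedding Fin.castSuccEmb).toEmbedding := by
    ext S
    simp [subset_map_iff, eq_comm]
  rw [← powerset_univ, Fin.univ_castSuccEmb, cons_eq_insert, sum_powerset_insert (by simp),
    hpow, sum_map, sum_map, ← sum_add_distrib]
  rfl

@[simp]
theorem last_notMem_map_castSuccEmb (T : Finset (Fin n)) :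
    Fin.last n ∉ T.map Fin.castSuccEmb := by
  simp [Fin.castSucc_ne_last]

@[simp]
theorem compl_map_castSuccEmb (T : Finset (Fin n)) :
    (T.map Fin.castSuccEmb)ᶜ = insert (Fin.last n) (Tᶜ.map Fin.castSuccEmb) := by
  ext i
  induction i using Fin.lastCases <;> simp [Fin.castSucc_ne_last]

@[simp]
theorem compl_insert_last_map_castSuccEmb (T : Finset (Fin n)) :
    (insert (Fin.last n) (T.map Fin.castSuccEmb))ᶜ = Tᶜ.map Fin.castSuccEmb := by
  rw [← compl_compl (Tᶜ.map _), compl_map_castSuccEmb, compl_compl]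

theorem sort_map_castSuccEmb (T : Finset (Fin n)) :
    (T.map Fin.castSuccEmb).sort (· ≤ ·) = (T.sort (· ≤ ·)).map Fin.castSucc :=
  (Fin.strictMono_castSucc.strictMonoOn _).map_finsetSort.symm

theorem sort_insert_last_map_castSuccEmb (T : Finset (Fin n)) :
    (insert (Fin.last n) (T.map Fin.castSuccEmb)).sort (· ≤ ·)
      = (T.sort (· ≤ ·)).map Fin.castSucc ++ [Fin.last n] := by
  set l := (T.sort (· ≤ ·)).map Fin.castSucc ++ [Fin.last n]
  have hl : l.Nodup := by
    simp [l, List.nodup_append, List.Nodup.map (Fin.castSucc_injective n), Fin.castSucc_ne_last]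
  have hsorted : l.Pairwise (· ≤ ·) := by
    simp [l, List.pairwise_append, List.pairwise_map, Fin.le_last]
  rw [← (List.toFinset_sort _ hl).2 hsorted]
  congr 1
  ext i
  simp [l]

end Subsets

section Snoc

variable {A : Type} [Ring A] {n : ℕ}

theorem prodOn_snoc_map (b : Fin n → A) (x : A) (T : Finset (Fin n)) :
    prodOn (Fin.snoc b x) (T.map Fin.castSuccEmb) = prodOn b T := by
  simp [prodOn, sort_map_castSuccEmb, Function.comp_def]

theorem prodOn_snoc_insert_last (b : Fin n → A) (x : A) (T : Finset (Fin n)) :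
    prodOn (Fin.snoc b x) (insert (Fin.last n) (T.map Fin.castSuccEmb)) = prodOn b T * x := by
  simp [prodOn, sort_insert_last_map_castSuccEmb, Function.comp_def]

theorem koszulSignSet_snoc_map (e : Fin n → ℤ) (δ : ℤ) (T : Finset (Fin n)) :
    koszulSignSet (Fin.snoc e δ) (T.map Fin.castSuccEmb) = koszulSignSet e T := by
  simp [koszulSignSet, filter_insert, filter_map, Function.comp_def,
    (Fin.castSucc_lt_last _).not_gt]

theorem koszulSignSet_snoc_insert_last (e : Fin n → ℤ) (δ : ℤ) (T : Finset (Fin n)) :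
    koszulSignSet (Fin.snoc e δ) (insert (Fin.last n) (T.map Fin.castSuccEmb))
      = ((δ * ∑ l ∈ Tᶜ, e l).negOnePow : ℤ) * koszulSignSet e T := by
  simp [koszulSignSet, filter_map, Function.comp_def, Int.negOnePow_add, mul_sum]

end Snoc

section BraceTerm

variable {A : Type} [Ring A] (Δ : A → A)

-- `#Sᶜ = k - #S`, without truncated subtraction.
noncomputable def braceTerm {k : ℕ} (d : Fin k → ℤ) (a : Fin k → A) (S : Finset (Fin k)) :
    A :=
  ((-1 : ℤ) ^ #Sᶜ * koszulSignSet d S) • (Δ (prodOn a S) * prodOn a Sᶜ)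

theorem koszulBrace_eq_sum_braceTerm_sub {K : Type} [Field K] [Algebra K A] (Δ : A →ₗ[K] A)
    {k : ℕ} (d : Fin k → ℤ) (a : Fin k → A) :
    koszulBrace Δ d a = ∑ S, braceTerm Δ d a S - braceTerm Δ d a ∅ := by
  have hempty : univ.filter (fun S : Finset (Fin k) => ¬S.Nonempty) = {∅} := by
    ext S
    simp [not_nonempty_iff_eq_empty]
  rw [eq_sub_iff_add_eq, ← sum_filter_add_sum_filter_not univ (fun S => S.Nonempty), hempty,
    sum_singleton, koszulBrace, powerset_univ]
  simp only [braceTerm, card_compl, Fintype.card_fin]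

variable {n : ℕ}

theorem braceTerm_snoc_map (e : Fin n → ℤ) (δ : ℤ) (b : Fin n → A) (x : A)
    (T : Finset (Fin n)) :
    braceTerm Δ (Fin.snoc e δ) (Fin.snoc b x) (T.map Fin.castSuccEmb)
      = -(braceTerm Δ e b T * x) := by
  simp only [braceTerm, compl_map_castSuccEmb, card_insert_of_notMem,
    last_notMem_map_castSuccEmb, not_false_eq_true, card_map, koszulSignSet_snoc_map,
    prodOn_snoc_map, prodOn_snoc_insert_last, pow_succ, mul_neg_one, neg_mul, neg_smul,
    smul_mul_assoc, mul_assoc]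

theorem braceTerm_snoc_insert_last (e : Fin n → ℤ) (δ : ℤ) (b : Fin n → A) (x : A)
    (T : Finset (Fin n)) :
    braceTerm Δ (Fin.snoc e δ) (Fin.snoc b x) (insert (Fin.last n) (T.map Fin.castSuccEmb))
      = ((-1 : ℤ) ^ #Tᶜ * ((δ * ∑ l ∈ Tᶜ, e l).negOnePow : ℤ) * koszulSignSet e T) •
          (Δ (prodOn b T * x) * prodOn b Tᶜ) := by
  simp only [braceTerm, compl_insert_last_map_castSuccEmb, card_map, prodOn_snoc_map,
    prodOn_snoc_insert_last, koszulSignSet_snoc_insert_last, mul_assoc]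

end BraceTerm

section Recursion

variable {A : Type} [Ring A] (Δ : A → A) {m : ℕ} (e : Fin m → ℤ) (b : Fin m → A)
  (δx δy : ℤ) (x y : A) (U : Finset (Fin m))

theorem braceTerm_snoc_snoc_map_map (hxy : y * x = ((δy * δx).negOnePow : ℤ) • (x * y)) :
    braceTerm Δ (Fin.snoc (Fin.snoc e δx) δy) (Fin.snoc (Fin.snoc b x) y)
        ((U.map Fin.castSuccEmb).map Fin.castSuccEmb)
      = braceTerm Δ (Fin.snoc e (δx + δy)) (Fin.snoc b (x * y)) (U.map Fin.castSuccEmb)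
        - braceTerm Δ (Fin.snoc e δx) (Fin.snoc b x) (U.map Fin.castSuccEmb) * y
        - ((δy * δx).negOnePow : ℤ) •
            (braceTerm Δ (Fin.snoc e δy) (Fin.snoc b y) (U.map Fin.castSuccEmb) * x) := by
  have hε : ((δy * δx).negOnePow : ℤ) * (δy * δx).negOnePow = 1 := by
    rw [← Units.val_mul, Int.units_mul_self, Units.val_one]
  simp only [braceTerm_snoc_map, neg_mul, smul_neg, sub_neg_eq_add, mul_assoc, hxy,
    mul_smul_comm, smul_smul, hε, one_smul]
  abel

theorem braceTerm_snoc_snoc_insert_map :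
    braceTerm Δ (Fin.snoc (Fin.snoc e δx) δy) (Fin.snoc (Fin.snoc b x) y)
        (insert (Fin.last (m + 1)) ((U.map Fin.castSuccEmb).map Fin.castSuccEmb))
      = -(((δy * δx).negOnePow : ℤ) • (braceTerm Δ (Fin.snoc e δy) (Fin.snoc b y)
          (insert (Fin.last m) (U.map Fin.castSuccEmb)) * x)) := by
  simp only [braceTerm_snoc_insert_last, compl_map_castSuccEmb, card_insert_of_notMem,
    last_notMem_map_castSuccEmb, not_false_eq_true, card_map, sum_insert, sum_map, Fin.snoc_last,
    Fin.coe_castSuccEmb, Fin.snoc_castSucc, koszulSignSet_snoc_map, prodOn_snoc_map,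
    prodOn_snoc_insert_last, smul_mul_assoc, smul_smul, ← neg_smul, mul_assoc]
  congr 1
  rw [mul_add, Int.negOnePow_add, Units.val_mul, pow_succ]
  ring

theorem braceTerm_snoc_snoc_insert_insert :
    braceTerm Δ (Fin.snoc (Fin.snoc e δx) δy) (Fin.snoc (Fin.snoc b x) y)
        (insert (Fin.last (m + 1))
          ((insert (Fin.last m) (U.map Fin.castSuccEmb)).map Fin.castSuccEmb))
      = braceTerm Δ (Fin.snoc e (δx + δy)) (Fin.snoc b (x * y))
          (insert (Fin.last m) (U.map Fin.castSuccEmb)) := by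
  simp only [braceTerm_snoc_insert_last, compl_insert_last_map_castSuccEmb, card_map, sum_map,
    Fin.coe_castSuccEmb, Fin.snoc_castSucc, koszulSignSet_snoc_insert_last,
    prodOn_snoc_insert_last, prodOn_snoc_map, mul_assoc]
  congr 1
  rw [add_mul, Int.negOnePow_add, Units.val_mul]
  ring

end Recursion

theorem koszulBrace_snoc_snoc {K A : Type} [Field K] [Ring A] [Algebra K A] (Δ : A →ₗ[K] A)
    {m : ℕ} (e : Fin m → ℤ) (b : Fin m → A) (δx δy : ℤ) (x y : A)
    (hxy : y * x = ((δy * δx).negOnePow : ℤ) • (x * y)) :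
    koszulBrace Δ (Fin.snoc (Fin.snoc e δx) δy) (Fin.snoc (Fin.snoc b x) y)
      = koszulBrace Δ (Fin.snoc e (δx + δy)) (Fin.snoc b (x * y))
        - koszulBrace Δ (Fin.snoc e δx) (Fin.snoc b x) * y
        - ((δy * δx).negOnePow : ℤ) •
            (koszulBrace Δ (Fin.snoc e δy) (Fin.snoc b y) * x) := by
  set g : Finset (Fin (m + 1)) → A := fun T =>
    braceTerm Δ (Fin.snoc e (δx + δy)) (Fin.snoc b (x * y)) T
      - braceTerm Δ (Fin.snoc e δx) (Fin.snoc b x) T * y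
      - ((δy * δx).negOnePow : ℤ) • (braceTerm Δ (Fin.snoc e δy) (Fin.snoc b y) T * x)
  have hsum : ∑ S, braceTerm Δ (Fin.snoc (Fin.snoc e δx) δy) (Fin.snoc (Fin.snoc b x) y) S
      = ∑ T, g T := by
    simp only [sum_finset_fin_succ (n := m + 1), sum_finset_fin_succ (n := m)]
    refine sum_congr rfl fun U _ => ?_
    rw [braceTerm_snoc_snoc_map_map Δ e b δx δy x y U hxy,
      braceTerm_snoc_map Δ (Fin.snoc e δx) δy (Fin.snoc b x) y, braceTerm_snoc_snoc_insert_map,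
      braceTerm_snoc_snoc_insert_insert]
    simp only [g]
    abel
  have hempty := braceTerm_snoc_snoc_map_map Δ e b δx δy x y ∅ hxy
  simp only [map_empty] at hempty
  simp only [koszulBrace_eq_sum_braceTerm_sub, hsum, hempty, g, sum_sub_distrib, ← sum_mul,
    ← smul_sum, sub_mul, smul_sub]
  abel

theorem exists_eq_snoc_snoc {α : Type*} {n : ℕ} (f : Fin (n + 2) → α) :
    ∃ g x y, f = Fin.snoc (Fin.snoc g x) y :=
  ⟨Fin.init (Fin.init f), Fin.init f (Fin.last n), f (Fin.last (n + 1)), by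
    simp only [Fin.snoc_init_self]⟩

theorem koszulBrace_hereditary_general
    (K : Type) [Field K]
    (A : Type) [Ring A] [Algebra K A]
    (𝒜 : ℤ → Submodule K A) [GradedAlgebra 𝒜]
    (hcomm : ∀ (i j : ℤ) (a b : A), a ∈ 𝒜 i → b ∈ 𝒜 j →
      a * b = ((i * j).negOnePow : ℤ) • (b * a))
    (Δ : A →ₗ[K] A)
    (k : ℕ) (hk : 1 ≤ k)
    (h : ∀ (d : Fin k → ℤ) (a : Fin k → A),
      (∀ j, a j ∈ 𝒜 (d j)) → koszulBrace Δ d a = 0) :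
    ∀ (d : Fin (k+1) → ℤ) (a : Fin (k+1) → A),
      (∀ j, a j ∈ 𝒜 (d j)) → koszulBrace Δ d a = 0 := by
  obtain ⟨m, rfl⟩ : ∃ m, k = m + 1 := ⟨k - 1, by omega⟩
  intro d a ha
  obtain ⟨e, δx, δy, rfl⟩ := exists_eq_snoc_snoc d
  obtain ⟨b, x, y, rfl⟩ := exists_eq_snoc_snoc a
  simp only [Fin.forall_fin_succ', Fin.snoc_castSucc, Fin.snoc_last] at ha
  obtain ⟨⟨hb, hx⟩, hy⟩ := ha
  have h_snoc {δ : ℤ} {z : A} (hz : z ∈ 𝒜 δ) :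
      koszulBrace Δ (Fin.snoc e δ) (Fin.snoc b z) = 0 :=
    h _ _ (by
      simpa only [Fin.forall_fin_succ', Fin.snoc_castSucc, Fin.snoc_last] using ⟨hb, hz⟩)
  rw [koszulBrace_snoc_snoc Δ e b δx δy x y (hcomm _ _ _ _ hy hx),
    h_snoc (SetLike.mul_mem_graded hx hy), h_snoc hx, h_snoc hy]
  simp

theorem koszulBrace_hereditary
    (K : Type) [Field K] [CharZero K]
    (A : Type) [Ring A] [Algebra K A]
    (𝒜 : ℤ → Submodule K A) [GradedAlgebra 𝒜]
    (hcomm : ∀ (i j : ℤ) (a b : A), a ∈ 𝒜 i → b ∈ 𝒜 j →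
      a * b = ((i * j).negOnePow : ℤ) • (b * a))
    (Δ : A →ₗ[K] A)
    (hΔ : ∀ (i : ℤ) (x : A), x ∈ 𝒜 i → Δ x ∈ 𝒜 (i + 1))
    (k : ℕ) (hk : 1 ≤ k)
    (h : ∀ (d : Fin k → ℤ) (a : Fin k → A),
      (∀ j, a j ∈ 𝒜 (d j)) → koszulBrace Δ d a = 0) :
    ∀ (d : Fin (k+1) → ℤ) (a : Fin (k+1) → A),
      (∀ j, a j ∈ 𝒜 (d j)) → koszulBrace Δ d a = 0 :=
  koszulBrace_hereditary_general K A 𝒜 hcomm Δ k hk h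
end

section
/- Börjeson's braces b_k^Δ satisfy the recursion b_{k+1}^Δ(a₁,…,a_{k+1}) = b_k^Δ(a₁, a₂a₃, a₄, …, a_{k+1}) for k ≥ 3; consequently if b_k^Δ = 0 identically then b_{k+1}^Δ = 0 identically (hereditarity). -/
/- STATEMENT 3: Börjeson's braces
`b_k^Δ(a₁,…,a_k) = Δ(a₁⋯a_k) − Δ(a₁⋯a_{k−1})a_k − (−1)^{|a₁|}a₁Δ(a₂⋯a_k)
                  + (−1)^{|a₁|}a₁Δ(a₂⋯a_{k−1})a_k`  (k ≥ 3)
satisfy `b_{k+1}^Δ(a₁,…,a_{k+1}) = b_k^Δ(a₁, a₂a₃, a₄, …, a_{k+1})` for `k ≥ 3`;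
consequently if `b_k^Δ = 0` identically then `b_{k+1}^Δ = 0` identically. -/

/-- Börjeson's brace `b_{n+1}^Δ` (the formula valid for `n+1 ≥ 3`); `d₀` is the degree
of the first argument. -/
noncomputable def borjeson {K A : Type} [Field K] [Ring A] [Algebra K A]
    (Δ : A →ₗ[K] A) (d₀ : ℤ) {n : ℕ} (a : Fin (n+1) → A) : A :=
  Δ (List.ofFn a).prod
    - Δ ((List.ofFn a).dropLast.prod) * a (Fin.last n)
    - (d₀.negOnePow : ℤ) • (a 0 * Δ (((List.ofFn a).drop 1).prod))
    + (d₀.negOnePow : ℤ) • (a 0 * Δ (((List.ofFn a).drop 1).dropLast.prod) * a (Fin.last n))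

/-! Proof idea: all four products entering `b_{k+1}(a₁,…,a_{k+1})` contain `a₂` and `a₃` side by
side or contain neither, and for `k ≥ 3` the last argument `a_{k+1}` is not one of them; so by
associativity replacing `a₂, a₃` by `a₂a₃` changes none of the terms. For hereditarity, `a₂a₃` is
again homogeneous, of degree `|a₂| + |a₃|`. -/

def contractSecondThird {α : Type*} (f : α → α → α) {m : ℕ} (a : Fin (m+3) → α) :
    Fin (m+2) → α :=
  Fin.cons (a 0) (Fin.cons (f (a 1) (a 2)) fun i => a i.succ.succ.succ)

section contractSecondThird

variable {α : Type*} (f : α → α → α) {m : ℕ} (a : Fin (m+3) → α)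

@[simp]
theorem contractSecondThird_zero : contractSecondThird f a 0 = a 0 := rfl

theorem contractSecondThird_last (b : Fin (m+4) → α) :
    contractSecondThird f b (Fin.last (m+2)) = b (Fin.last (m+3)) := by
  simp only [contractSecondThird, ← Fin.succ_last, Fin.cons_succ]

theorem List.ofFn_contractSecondThird :
    List.ofFn (contractSecondThird f a) =
      a 0 :: f (a 1) (a 2) :: List.ofFn fun i : Fin m => a i.succ.succ.succ := by
  simp [contractSecondThird, List.ofFn_succ]

theorem List.ofFn_eq_cons_cons_cons :
    List.ofFn a = a 0 :: a 1 :: a 2 :: List.ofFn fun i : Fin m => a i.succ.succ.succ := by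
  simp [List.ofFn_succ]

end contractSecondThird

theorem borjeson_contractSecondThird {K A : Type} [Field K] [Ring A] [Algebra K A]
    (Δ : A →ₗ[K] A) (d₀ : ℤ) {m : ℕ} (a : Fin (m+4) → A) :
    borjeson Δ d₀ (contractSecondThird (· * ·) a) = borjeson Δ d₀ a := by
  obtain ⟨x, l, hl⟩ : ∃ x l, List.ofFn (fun i : Fin (m+1) => a i.succ.succ.succ) = x :: l :=
    ⟨_, _, List.ofFn_succ⟩
  unfold borjeson
  rw [List.ofFn_contractSecondThird, List.ofFn_eq_cons_cons_cons a, hl,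
    contractSecondThird_last, contractSecondThird_zero]
  simp [List.dropLast, mul_assoc]

theorem SetLike.contractSecondThird_mem_graded {ι R S : Type*} [SetLike S R] [Mul R] [Add ι]
    {𝒜 : ι → S} [SetLike.GradedMul 𝒜] {m : ℕ} {d : Fin (m+3) → ι} {a : Fin (m+3) → R}
    (ha : ∀ j, a j ∈ 𝒜 (d j)) (j : Fin (m+2)) :
    contractSecondThird (· * ·) a j ∈ 𝒜 (contractSecondThird (· + ·) d j) := by
  refine Fin.cases (ha 0) (fun j => Fin.cases ?_ (fun j => ha j.succ.succ.succ) j) j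
  exact SetLike.GradedMul.mul_mem (ha 1) (ha 2)

theorem borjeson_recursion_and_hereditary_general
    (K : Type) [Field K]
    (A : Type) [Ring A] [Algebra K A]
    (𝒜 : ℤ → Submodule K A) [GradedAlgebra 𝒜]
    (Δ : A →ₗ[K] A) :
    -- the recursion b_{k+1}(a₁,…,a_{k+1}) = b_k(a₁, a₂a₃, a₄,…,a_{k+1}) for k = m+3 ≥ 3
    (∀ (m : ℕ) (d : Fin (m+4) → ℤ) (a : Fin (m+4) → A), (∀ j, a j ∈ 𝒜 (d j)) →
      borjeson Δ (d 0) a =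
        borjeson Δ (d 0)
          (Fin.cons (a 0) (Fin.cons (a 1 * a 2)
            (fun i : Fin (m+1) => a i.succ.succ.succ))))
    ∧
    -- consequently, hereditarity for k = m+3 ≥ 3
    (∀ (m : ℕ),
      (∀ (d : Fin (m+3) → ℤ) (a : Fin (m+3) → A), (∀ j, a j ∈ 𝒜 (d j)) →
        borjeson Δ (d 0) a = 0) →
      (∀ (d : Fin (m+4) → ℤ) (a : Fin (m+4) → A), (∀ j, a j ∈ 𝒜 (d j)) →
        borjeson Δ (d 0) a = 0)) := by
  refine ⟨fun m d a _ => (borjeson_contractSecondThird Δ (d 0) a).symm, fun m hvanish d a ha => ?_⟩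
  rw [← borjeson_contractSecondThird]
  exact hvanish (contractSecondThird (· + ·) d) _ (SetLike.contractSecondThird_mem_graded ha)

theorem borjeson_recursion_and_hereditary
    (K : Type) [Field K] [CharZero K]
    (A : Type) [Ring A] [Algebra K A]
    (𝒜 : ℤ → Submodule K A) [GradedAlgebra 𝒜]
    (Δ : A →ₗ[K] A)
    (hΔ : ∀ (i : ℤ) (x : A), x ∈ 𝒜 i → Δ x ∈ 𝒜 (i + 1)) :
    -- the recursion b_{k+1}(a₁,…,a_{k+1}) = b_k(a₁, a₂a₃, a₄,…,a_{k+1}) for k = m+3 ≥ 3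
    (∀ (m : ℕ) (d : Fin (m+4) → ℤ) (a : Fin (m+4) → A), (∀ j, a j ∈ 𝒜 (d j)) →
      borjeson Δ (d 0) a =
        borjeson Δ (d 0)
          (Fin.cons (a 0) (Fin.cons (a 1 * a 2)
            (fun i : Fin (m+1) => a i.succ.succ.succ))))
    ∧
    -- consequently, hereditarity for k = m+3 ≥ 3
    (∀ (m : ℕ),
      (∀ (d : Fin (m+3) → ℤ) (a : Fin (m+3) → A), (∀ j, a j ∈ 𝒜 (d j)) →
        borjeson Δ (d 0) a = 0) →
      (∀ (d : Fin (m+4) → ℤ) (a : Fin (m+4) → A), (∀ j, a j ∈ 𝒜 (d j)) →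
        borjeson Δ (d 0) a = 0)) :=
  borjeson_recursion_and_hereditary_general K A 𝒜 Δ
end

section
/- For φ(t) = t/(1−t) with inverse ψ(t) = t/(1+t), the noncommutative coefficients c_{r,s} defined by c_{r,s} = Σ_{k,l≥0} g_{k+l+1} Σ_{a₁+⋯+a_k = r} f_{a₁}⋯f_{a_k} Σ_{b₁+⋯+b_l = s} f_{b₁}⋯f_{b_l} (with f_i = 1 for all i, g_m = (−1)^{m+1}, empty products equal 1) satisfy: c_{0,0} = 1, c_{1,1} = 1, c_{0,1} = c_{1,0} = −1, and c_{r,s} = 0 in all other cases. -/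
/-!
Since `g_{k+l+1} = (-1)^k (-1)^l`, the double sum factors as `c_{r,s} = T_r T_s` with
`T_r = ∑_k (-1)^k ∑_{a₁+⋯+a_k=r} f_{a₁}⋯f_{a_k}`, the coefficient of `t^r` in `1 / (1 + φ(t))`.
Splitting off the first part of a composition gives `T_{r+1} = -∑_{j ≤ r} f_{r+1-j} T_j`;
for `f = 1` this is the expansion of `1 / (1 + t/(1-t)) = 1 - t`, i.e. `T = 1, -1, 0, 0, …`.
-/

def fBor : ℕ → ℤ := fun _ => 1

def gBor : ℕ → ℤ := fun m => (-1) ^ (m+1)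

/-- `Σ_{a₁+⋯+a_k = r, a_i ≥ 1} f_{a₁}⋯f_{a_k}` (equals 0 for `k > r`, hence the sum over
all `k ≥ 0` reduces to `k ≤ r`). -/
def compSum (f : ℕ → ℤ) (k r : ℕ) : ℤ :=
  ∑ a ∈ (Finset.Nat.antidiagonalTuple k r).filter (fun a => ∀ j, 1 ≤ a j), ∏ j, f (a j)

def cBor (r s : ℕ) : ℤ :=
  ∑ k ∈ Finset.range (r+1), ∑ l ∈ Finset.range (s+1),
    gBor (k + l + 1) * compSum fBor k r * compSum fBor l s

open Finset

lemma compSum_eq_zero_of_lt (f : ℕ → ℤ) {k r : ℕ} (h : r < k) : compSum f k r = 0 := by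
  refine sum_eq_zero fun a ha => absurd ha ?_
  simp only [mem_filter, Nat.mem_antidiagonalTuple, not_and]
  intro hsum hpos
  have : k ≤ ∑ i, a i := by simpa using sum_le_sum fun i (_ : i ∈ univ) => hpos i
  omega

lemma compSum_zero_zero (f : ℕ → ℤ) : compSum f 0 0 = 1 := by
  simp [compSum, Nat.antidiagonalTuple_zero_zero]

lemma compSum_zero_succ (f : ℕ → ℤ) (r : ℕ) : compSum f 0 (r + 1) = 0 := by
  simp [compSum, Nat.antidiagonalTuple_zero_succ]

/-- Splitting off the first part `a₀ = r - j` of a composition. -/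
lemma compSum_succ (f : ℕ → ℤ) (k r : ℕ) :
    compSum f (k + 1) r = ∑ j ∈ range r, f (r - j) * compSum f k j := by
  simp only [compSum, mul_sum]
  rw [sum_sigma']
  refine sum_nbij' (fun a => ⟨∑ i, Fin.tail a i, Fin.tail a⟩) (fun p => Fin.cons (r - p.1) p.2)
    ?_ ?_ ?_ ?_ ?_
  · intro a ha
    simp only [mem_filter, Nat.mem_antidiagonalTuple, Fin.sum_univ_succ] at ha
    simp only [mem_sigma, mem_range, mem_filter, Nat.mem_antidiagonalTuple]
    have h₀ := ha.2 0
    exact ⟨by simp only [Fin.tail]; omega, trivial, fun i => ha.2 i.succ⟩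
  · rintro ⟨j, b⟩ hp
    simp only [mem_sigma, mem_range, mem_filter, Nat.mem_antidiagonalTuple] at hp
    simp only [mem_filter, Nat.mem_antidiagonalTuple, Fin.sum_univ_succ,
      Fin.cons_zero, Fin.cons_succ, hp.2.1]
    refine ⟨by omega, Fin.cases (by simp only [Fin.cons_zero]; omega) fun i => ?_⟩
    simpa only [Fin.cons_succ] using hp.2.2 i
  · intro a ha
    simp only [mem_filter, Nat.mem_antidiagonalTuple, Fin.sum_univ_succ] at ha
    have : r - ∑ i, Fin.tail a i = a 0 := by simp only [Fin.tail]; omega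
    simp only [this, Fin.cons_self_tail]
  · rintro ⟨j, b⟩ hp
    simp only [mem_sigma, mem_filter, Nat.mem_antidiagonalTuple] at hp
    simp only [Fin.tail_cons, hp.2.1]
  · intro a ha
    simp only [mem_filter, Nat.mem_antidiagonalTuple, Fin.sum_univ_succ] at ha
    rw [Fin.prod_univ_succ]
    congr 2
    simp only [Fin.tail]; omega

/-- The coefficient of `t^r` in `1 / (1 + F(t))`, where `F(t) = ∑_{i ≥ 1} f_i t^i`. -/
def altCompSum (f : ℕ → ℤ) (r : ℕ) : ℤ :=
  ∑ k ∈ range (r + 1), (-1) ^ k * compSum f k r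

lemma sum_range_neg_one_pow_mul_compSum (f : ℕ → ℤ) {n r : ℕ} (h : r ≤ n) :
    ∑ k ∈ range (n + 1), (-1) ^ k * compSum f k r = altCompSum f r := by
  refine (sum_subset (range_subset_range.mpr (by omega)) fun k hk hk' => ?_).symm
  simp only [mem_range] at hk hk'
  rw [compSum_eq_zero_of_lt f (by omega), mul_zero]

lemma altCompSum_zero (f : ℕ → ℤ) : altCompSum f 0 = 1 := by
  simp [altCompSum, compSum_zero_zero]

lemma altCompSum_succ (f : ℕ → ℤ) (r : ℕ) :
    altCompSum f (r + 1) = -∑ j ∈ range (r + 1), f (r + 1 - j) * altCompSum f j := by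
  rw [altCompSum, sum_range_succ', compSum_zero_succ, mul_zero, add_zero, ← sum_neg_distrib]
  calc ∑ k ∈ range (r + 1), (-1) ^ (k + 1) * compSum f (k + 1) (r + 1)
      = ∑ j ∈ range (r + 1),
          -(f (r + 1 - j) * ∑ k ∈ range (r + 1), (-1) ^ k * compSum f k j) := by
        simp only [compSum_succ, mul_sum, ← sum_neg_distrib]
        rw [sum_comm]
        exact sum_congr rfl fun j _ => sum_congr rfl fun k _ => by ring
    _ = _ := sum_congr rfl fun j hj => by
        rw [sum_range_neg_one_pow_mul_compSum f (by simp only [mem_range] at hj; omega)]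

lemma altCompSum_fBor_one : altCompSum fBor 1 = -1 := by
  simp [altCompSum_succ, altCompSum_zero, fBor]

lemma altCompSum_fBor_eq_zero {n : ℕ} (hn : 2 ≤ n) : altCompSum fBor n = 0 := by
  obtain ⟨r, rfl⟩ := Nat.exists_eq_add_of_le' hn
  have h₁ := altCompSum_succ fBor r
  have h₂ := altCompSum_succ fBor (r + 1)
  simp only [fBor, one_mul] at h₁ h₂
  rw [h₂, sum_range_succ, h₁, add_neg_cancel, neg_zero]

lemma cBor_eq_mul (r s : ℕ) : cBor r s = altCompSum fBor r * altCompSum fBor s := by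
  rw [cBor, altCompSum, altCompSum, sum_mul_sum]
  refine sum_congr rfl fun k _ => sum_congr rfl fun l _ => ?_
  rw [gBor, pow_add (-1) (k + l + 1), pow_add (-1) (k + l)]
  ring

theorem cBor_values :
    cBor 0 0 = 1 ∧ cBor 1 1 = 1 ∧ cBor 0 1 = -1 ∧ cBor 1 0 = -1 ∧
    ∀ r s : ℕ, (r, s) ∉ ({(0,0), (1,1), (0,1), (1,0)} : Set (ℕ × ℕ)) → cBor r s = 0 := by
  simp only [cBor_eq_mul, altCompSum_zero, altCompSum_fBor_one]
  refine ⟨by norm_num, by norm_num, by norm_num, by norm_num, fun r s hrs => ?_⟩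
  by_cases hr : 2 ≤ r
  · rw [altCompSum_fBor_eq_zero hr, zero_mul]
  by_cases hs : 2 ≤ s
  · rw [altCompSum_fBor_eq_zero hs, mul_zero]
  interval_cases r <;> interval_cases s <;> simp at hrs
end
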